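/- Assume q ≠ 1. Let (τ_{n+1})_{n≥0} be a Jones–Markov trace on the tower (TL_n(q))_{n≥0}, and define ρ_1 := τ_1 and ρ_{n+1} := τ_{n+1} ∘ E_n for n ≥ 1. Then ρ_{n+1}(F_n(h)·T_{σ_n}) = ρ_n(h) and ρ_{n+1}(F_n(h)·T_{σ_n}^{−1}) = ρ_n(h) for all h ∈ TLhat_n(q) and all n ≥ 1, and each ρ_n is invariant under the Dynkin automorphism ψ_n (i.e. ρ_n ∘ ψ_n = ρ_n). -/

import Mathlib

namespace AffineTL

open FreeAlgebra

/-- Cyclic successor on `Fin m`. -/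
def csucc {m : ℕ} (i : Fin m) : Fin m := ⟨(i.val + 1) % m, Nat.mod_lt _ i.pos⟩

/-- The defining relations of the affine Temperley–Lieb algebra `TLhat_m(q)` with `m`
generators (indexed so that `g_{σ_i}` has index `i - 1` and `g_{a_m}` has index `m - 1`).
For `m = 1` the unique generator is set to `0`, so that `TLhat_1(q) ≅ K`. -/
inductive ATLRel {K : Type*} [CommRing K] (q : K) (m : ℕ) :
    FreeAlgebra K (Fin m) → FreeAlgebra K (Fin m) → Prop
  | degen (h : m ≤ 1) (i : Fin m) : ATLRel q m (ι K i) 0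
  | quad (h : 2 ≤ m) (i : Fin m) :
      ATLRel q m (ι K i * ι K i) ((q - 1) • ι K i + algebraMap K _ q)
  | comm (h : 3 ≤ m) (i j : Fin m) (h1 : i ≠ j) (h2 : j ≠ csucc i) (h3 : i ≠ csucc j) :
      ATLRel q m (ι K i * ι K j) (ι K j * ι K i)
  | braid (h : 3 ≤ m) (i : Fin m) :
      ATLRel q m (ι K i * ι K (csucc i) * ι K i) (ι K (csucc i) * ι K i * ι K (csucc i))
  | vrel (h : 3 ≤ m) (i : Fin m) :
      ATLRel q m (ι K i * ι K (csucc i) * ι K i + ι K i * ι K (csucc i) + ι K (csucc i) * ι K i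
        + ι K i + ι K (csucc i) + 1) 0

/-- The affine Temperley–Lieb algebra `TLhat_m(q)` of type `Ã`. -/
abbrev ATL (K : Type*) [CommRing K] (q : K) (m : ℕ) : Type _ := RingQuot (ATLRel q m)

/-- The generators of `TLhat_m(q)`. -/
noncomputable def g {K : Type*} [CommRing K] (q : K) (m : ℕ) (i : Fin m) : ATL K q m :=
  RingQuot.mkAlgHom K (ATLRel q m) (ι K i)

/-- The defining relations of the type `A` Temperley–Lieb algebra `TL_n(q)` with `n`
generators (`g_{σ_i}` has index `i - 1`). -/
inductive TLARel {K : Type*} [CommRing K] (q : K) (n : ℕ) :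
    FreeAlgebra K (Fin n) → FreeAlgebra K (Fin n) → Prop
  | quad (i : Fin n) :
      TLARel q n (ι K i * ι K i) ((q - 1) • ι K i + algebraMap K _ q)
  | comm (i j : Fin n) (h : i.val + 2 ≤ j.val ∨ j.val + 2 ≤ i.val) :
      TLARel q n (ι K i * ι K j) (ι K j * ι K i)
  | braid (i j : Fin n) (h : j.val = i.val + 1) :
      TLARel q n (ι K i * ι K j * ι K i) (ι K j * ι K i * ι K j)
  | vrel (i j : Fin n) (h : j.val = i.val + 1) :
      TLARel q n (ι K i * ι K j * ι K i + ι K i * ι K j + ι K j * ι K i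
        + ι K i + ι K j + 1) 0

/-- The type `A` Temperley–Lieb algebra `TL_n(q)`. -/
abbrev TLA (K : Type*) [CommRing K] (q : K) (n : ℕ) : Type _ := RingQuot (TLARel q n)

/-- The generators of `TL_n(q)`. -/
noncomputable def gA {K : Type*} [CommRing K] (q : K) (n : ℕ) (i : Fin n) : TLA K q n :=
  RingQuot.mkAlgHom K (TLARel q n) (ι K i)

/-- The formal inverse `q⁻¹·(x − (q−1))` of an element satisfying `x² = (q−1)x + q`. -/
noncomputable def qinv {K : Type*} [CommRing K] (q : K) {A : Type*} [Ring A] [Algebra K A]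
    (x : A) : A :=
  Ring.inverse q • (x - algebraMap K A (q - 1))

/-- A trace on a `K`-algebra: a `K`-linear form vanishing on commutators. -/
def IsTrace {K : Type*} [CommRing K] {A : Type*} [Ring A] [Algebra K A]
    (τ : A →ₗ[K] K) : Prop :=
  ∀ x y : A, τ (x * y) = τ (y * x)

/-- The element `G = g_{σ_n}⋯g_{σ_1}·g_{a_{n+1}}` of `TLhat_{n+1}(q)`. -/
noncomputable def bigG {K : Type*} [CommRing K] (q : K) (n : ℕ) : ATL K q (n + 1) :=
  (List.ofFn fun j : Fin n => g q (n + 1) ⟨n - 1 - j.val, by omega⟩).prod *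
    g q (n + 1) (Fin.last n)

/-- The inverse `G⁻¹ = g_{a_{n+1}}⁻¹·g_{σ_1}⁻¹⋯g_{σ_n}⁻¹` of `bigG`. -/
noncomputable def bigGinv {K : Type*} [CommRing K] (q : K) (n : ℕ) : ATL K q (n + 1) :=
  qinv q (g q (n + 1) (Fin.last n)) *
    (List.ofFn fun j : Fin n => qinv q (g q (n + 1) j.castSucc)).prod

end AffineTL

namespace AffineTL

/-- `F` is the canonical homomorphism `F_m : TLhat_m(q) → TLhat_{m+1}(q)`:
`t_{σ_i} ↦ g_{σ_i}` for `1 ≤ i ≤ m−1` and `t_{a_m} ↦ g_{σ_m}·g_{a_{m+1}}·g_{σ_m}⁻¹`. -/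
def isF {K : Type*} [CommRing K] (q : K) (m : ℕ) (hm : 2 ≤ m)
    (F : ATL K q m →ₐ[K] ATL K q (m + 1)) : Prop :=
  (∀ i : ℕ, ∀ hi : i < m - 1,
      F (g q m ⟨i, by omega⟩) = g q (m + 1) ⟨i, by omega⟩) ∧
  F (g q m ⟨m - 1, by omega⟩) =
    g q (m + 1) ⟨m - 1, by omega⟩ * g q (m + 1) ⟨m, by omega⟩ *
      qinv q (g q (m + 1) ⟨m - 1, by omega⟩)

end AffineTL

namespace AffineTL

/-- `E` is the canonical surjection `E_n : TLhat_{n+1}(q) → TL_n(q)`: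
`g_{σ_i} ↦ g_{σ_i}` for `1 ≤ i ≤ n` and
`g_{a_{n+1}} ↦ g_{σ_1}⋯g_{σ_{n−1}}·g_{σ_n}·g_{σ_{n−1}}⁻¹⋯g_{σ_1}⁻¹`. -/
def isE {K : Type*} [CommRing K] (q : K) (n : ℕ) (hn : 1 ≤ n)
    (E : ATL K q (n + 1) →ₐ[K] TLA K q n) : Prop :=
  (∀ i : Fin n, E (g q (n + 1) i.castSucc) = gA q n i) ∧
  E (g q (n + 1) (Fin.last n)) =
    (List.ofFn fun j : Fin (n - 1) => gA q n ⟨j.val, by omega⟩).prod *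
      gA q n ⟨n - 1, by omega⟩ *
      (List.ofFn fun j : Fin (n - 1) => qinv q (gA q n ⟨n - 2 - j.val, by omega⟩)).prod

end AffineTL

/-!
Write `c_k = g_{σ_1} ⋯ g_{σ_k}` in the group of units of `TL_n(q)`, so that
`E_n(g_{a_{n+1}}) = c_n c_{n-1}⁻¹`. The braid relations give
`g_{σ_n} (c_n c_{n-1}⁻¹) g_{σ_n}⁻¹ = c_{n-1} c_{n-2}⁻¹`, which says that `E_n ∘ F_n` and
`ι_n ∘ E_{n-1}` agree on the generator `t_{a_n}`, hence everywhere; the affine Markov conditions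
are then those of `τ`. The braid relations also give `c_n g_{σ_i} c_n⁻¹ = g_{σ_{i+1}}` for
`i < n`, `c_n g_{σ_n} c_n⁻¹ = E_n(g_{a_{n+1}})` and `c_n E_n(g_{a_{n+1}}) c_n⁻¹ = g_{σ_1}`: the map
`E_n ∘ ψ_{n+1}` is `E_n` followed by conjugation by the Coxeter element `c_n`, which the trace
`τ_{n+1}` does not see.
-/

section BraidRelations

variable {G : Type*} [Group G]

structure SatisfiesBraidRelations (s : ℕ → G) (n : ℕ) : Prop where
  commute : ∀ i j, i + 2 ≤ j → j < n → Commute (s i) (s j)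
  braid : ∀ i, i + 1 < n → s i * s (i + 1) * s i = s (i + 1) * s i * s (i + 1)

def prefixProd (s : ℕ → G) (k : ℕ) : G := (List.ofFn fun i : Fin k => s i).prod

variable (s : ℕ → G)

@[simp]
theorem prefixProd_zero : prefixProd s 0 = 1 := rfl

theorem prefixProd_succ (k : ℕ) : prefixProd s (k + 1) = prefixProd s k * s k := by
  rw [prefixProd, prefixProd, List.ofFn_succ', List.concat_eq_append, List.prod_append,
    List.prod_singleton]
  rfl

theorem prefixProd_inv (k : ℕ) :
    (prefixProd s k)⁻¹ = (List.ofFn fun i : Fin k => (s (k - 1 - i))⁻¹).prod := by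
  induction k with
  | zero => simp
  | succ k ih =>
    rw [prefixProd_succ, mul_inv_rev, ih, List.ofFn_succ, List.prod_cons]
    congr 3 with i
    rw [Fin.val_succ]
    congr 2
    omega

theorem prefixProd_congr {t : ℕ → G} {k : ℕ} (h : ∀ i < k, s i = t i) :
    prefixProd s k = prefixProd t k :=
  congrArg List.prod (List.ofFn_inj.2 (funext fun i => h i i.isLt))

theorem map_prefixProd {H : Type*} [Group H] (f : G →* H) (k : ℕ) :
    f (prefixProd s k) = prefixProd (f ∘ s) k := by
  simp [prefixProd, map_list_prod, List.map_ofFn, Function.comp_def]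

namespace SatisfiesBraidRelations

variable {s} {n : ℕ}

theorem commute_prefixProd (h : SatisfiesBraidRelations s n) {j k : ℕ} (hkj : k + 1 ≤ j)
    (hj : j < n) :
    Commute (s j) (prefixProd s k) := by
  induction k with
  | zero => exact Commute.one_right _
  | succ k ih =>
    rw [prefixProd_succ]
    exact (ih (by omega)).mul_right (h.commute k j (by omega) hj).symm

theorem mul_prefixProd (h : SatisfiesBraidRelations s n) {i k : ℕ} (hik : i + 2 ≤ k)
    (hk : k ≤ n) :
    s (i + 1) * prefixProd s k = prefixProd s k * s i := by
  induction k, hik using Nat.le_induction with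
  | base =>
    have hb : s (i + 1) * (s i * s (i + 1)) = s i * (s (i + 1) * s i) := by
      simpa only [mul_assoc] using (h.braid i (by omega)).symm
    rw [prefixProd_succ, prefixProd_succ, ← mul_assoc, ← mul_assoc,
      (h.commute_prefixProd le_rfl (by omega)).eq]
    simp only [mul_assoc, hb]
  | succ k hik ih =>
    rw [prefixProd_succ, ← mul_assoc, ih (by omega), mul_assoc, mul_assoc,
      (h.commute i k (by omega) (by omega)).eq]

theorem mul_prefixProd_mul_prefixProd (h : SatisfiesBraidRelations s n) {k : ℕ}
    (hk : k + 1 ≤ n) :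
    s 0 * prefixProd s n * prefixProd s k = prefixProd s (k + 1) * prefixProd s n := by
  induction k with
  | zero => simp [prefixProd_succ]
  | succ k ih =>
    rw [prefixProd_succ s k, ← mul_assoc, ih (by omega), prefixProd_succ s (k + 1), mul_assoc,
      mul_assoc, ← h.mul_prefixProd (by omega) le_rfl]

theorem conj_prefixProd_mul_inv (h : SatisfiesBraidRelations s n) {k : ℕ}
    (hk : k + 2 ≤ n) :
    s (k + 1) * (prefixProd s (k + 2) * (prefixProd s (k + 1))⁻¹) * (s (k + 1))⁻¹ =
      prefixProd s (k + 1) * (prefixProd s k)⁻¹ := by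
  have hc := h.commute_prefixProd (k := k) le_rfl (by omega)
  have hb := h.braid k (by omega)
  set a := s (k + 1)
  set p := prefixProd s k
  set b := s k
  simp only [prefixProd_succ, mul_inv_rev]
  calc a * (p * b * a * (b⁻¹ * p⁻¹)) * a⁻¹
      = a * p * b * a * b⁻¹ * p⁻¹ * a⁻¹ := by group
    _ = p * (a * b * a) * b⁻¹ * p⁻¹ * a⁻¹ := by rw [hc.eq]; group
    _ = p * b * (a * p⁻¹) * a⁻¹ := by rw [← hb]; group
    _ = p * b * p⁻¹ := by rw [hc.inv_right.eq]; group

end SatisfiesBraidRelations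

end BraidRelations

namespace AffineTL

variable {K : Type*} [CommRing K] {q : K}

section QuadraticInverse

variable {A : Type*} [Ring A] [Algebra K A]

theorem mul_qinv_of_quadratic (hq : IsUnit q) {x : A}
    (hx : x * x = (q - 1) • x + algebraMap K A q) : x * qinv q x = 1 := by
  rw [qinv, mul_smul_comm, mul_sub, ← Algebra.commutes (q - 1) x, ← Algebra.smul_def, hx,
    add_sub_cancel_left, Algebra.algebraMap_eq_smul_one, smul_smul,
    Ring.inverse_mul_cancel _ hq, one_smul]

theorem qinv_mul_of_quadratic (hq : IsUnit q) {x : A}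
    (hx : x * x = (q - 1) • x + algebraMap K A q) : qinv q x * x = 1 := by
  rw [qinv, smul_mul_assoc, sub_mul, ← Algebra.smul_def, hx, add_sub_cancel_left,
    Algebra.algebraMap_eq_smul_one, smul_smul, Ring.inverse_mul_cancel _ hq, one_smul]

@[simps]
noncomputable def unitOfQuadratic (hq : IsUnit q) {x : A}
    (hx : x * x = (q - 1) • x + algebraMap K A q) : Aˣ where
  val := x
  inv := qinv q x
  val_inv := mul_qinv_of_quadratic hq hx
  inv_val := qinv_mul_of_quadratic hq hx

theorem map_qinv {B : Type*} [Ring B] [Algebra K B] (φ : A →ₐ[K] B) (x : A) :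
    φ (qinv q x) = qinv q (φ x) := by
  rw [qinv, qinv, map_smul, map_sub, AlgHom.commutes]

end QuadraticInverse

theorem IsTrace.apply_units_conj {A : Type*} [Ring A] [Algebra K A] {τ : A →ₗ[K] K}
    (hτ : IsTrace τ) (u : Aˣ) (x : A) : τ (u * x * ↑u⁻¹) = τ x := by
  rw [hτ, ← mul_assoc, Units.inv_mul, one_mul]

section TemperleyLieb

variable (q) (n : ℕ)

theorem gA_mul_self (i : Fin n) :
    gA q n i * gA q n i = (q - 1) • gA q n i + algebraMap K _ q := by
  rw [gA, ← map_mul, RingQuot.mkAlgHom_rel K (TLARel.quad i), map_add, map_smul,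
    AlgHom.commutes]

variable {q n}

theorem gA_commute {i j : Fin n} (h : i.val + 2 ≤ j.val) : Commute (gA q n i) (gA q n j) := by
  simpa only [gA, Commute, SemiconjBy, map_mul] using
    RingQuot.mkAlgHom_rel K (TLARel.comm (q := q) i j (Or.inl h))

theorem gA_braid {i j : Fin n} (h : j.val = i.val + 1) :
    gA q n i * gA q n j * gA q n i = gA q n j * gA q n i * gA q n j := by
  simpa only [gA, map_mul] using RingQuot.mkAlgHom_rel K (TLARel.braid (q := q) i j h)

noncomputable def genUnit (hq : IsUnit q) (n k : ℕ) : (TLA K q n)ˣ :=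
  if h : k < n then unitOfQuadratic hq (gA_mul_self q n ⟨k, h⟩) else 1

variable (hq : IsUnit q)

theorem coe_genUnit {k : ℕ} (h : k < n) : (genUnit hq n k : TLA K q n) = gA q n ⟨k, h⟩ := by
  simp [genUnit, h]

theorem coe_genUnit_inv {k : ℕ} (h : k < n) :
    (↑(genUnit hq n k)⁻¹ : TLA K q n) = qinv q (gA q n ⟨k, h⟩) := by
  simp [genUnit, h]

theorem qinv_coe_genUnit {k : ℕ} (h : k < n) :
    qinv q (genUnit hq n k : TLA K q n) = ↑(genUnit hq n k)⁻¹ := by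
  rw [coe_genUnit hq h, coe_genUnit_inv hq h]

theorem satisfiesBraidRelations_genUnit : SatisfiesBraidRelations (genUnit hq n) n where
  commute i j hij hj := by
    rw [← Commute.units_val_iff, coe_genUnit hq (by omega), coe_genUnit hq hj]
    exact gA_commute hij
  braid i hi := by
    ext
    simp only [Units.val_mul, coe_genUnit hq hi, coe_genUnit hq (Nat.lt_of_succ_lt hi)]
    exact gA_braid rfl

theorem coe_prefixProd_genUnit {k : ℕ} (hk : k ≤ n) :
    (↑(prefixProd (genUnit hq n) k) : TLA K q n) =
      (List.ofFn fun j : Fin k => gA q n ⟨j, by omega⟩).prod := by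
  rw [← Units.coeHom_apply, prefixProd, map_list_prod, List.map_ofFn]
  exact congrArg List.prod (List.ofFn_inj.2 (funext fun j => coe_genUnit hq _))

theorem coe_prefixProd_genUnit_inv {k : ℕ} (hk : k ≤ n) :
    (↑(prefixProd (genUnit hq n) k)⁻¹ : TLA K q n) =
      (List.ofFn fun j : Fin k => qinv q (gA q n ⟨k - 1 - j, by omega⟩)).prod := by
  rw [← Units.coeHom_apply, prefixProd_inv, map_list_prod, List.map_ofFn]
  exact congrArg List.prod (List.ofFn_inj.2 (funext fun j => coe_genUnit_inv hq _))

theorem units_map_prefixProd_genUnit {ι : TLA K q n →ₐ[K] TLA K q (n + 1)}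
    (hι : ∀ i : Fin n, ι (gA q n i) = gA q (n + 1) i.castSucc) {k : ℕ} (hk : k ≤ n) :
    Units.map ι (prefixProd (genUnit hq n) k) = prefixProd (genUnit hq (n + 1)) k := by
  rw [map_prefixProd]
  refine prefixProd_congr _ fun i hi => Units.ext ?_
  simp only [Function.comp_apply, Units.coe_map, MonoidHom.coe_coe,
    coe_genUnit hq (by omega : i < n), coe_genUnit hq (by omega : i < n + 1), hι]
  rfl

end TemperleyLieb

section Affine

theorem csucc_castSucc {m : ℕ} (i : Fin m) : csucc i.castSucc = i.succ :=
  Fin.ext (Nat.mod_eq_of_lt (Nat.succ_lt_succ i.isLt))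

theorem csucc_last (m : ℕ) : csucc (Fin.last m) = 0 :=
  Fin.ext (Nat.mod_self _)

theorem ATL.algHom_ext {m : ℕ} {A : Type*} [Semiring A] [Algebra K A]
    {φ φ' : ATL K q m →ₐ[K] A} (h : ∀ i, φ (g q m i) = φ' (g q m i)) : φ = φ' :=
  RingQuot.ringQuot_ext' K φ φ' (FreeAlgebra.hom_ext (funext h))

theorem g_eq_zero_of_le_one {m : ℕ} (hm : m ≤ 1) (i : Fin m) : g q m i = 0 := by
  rw [g, RingQuot.mkAlgHom_rel K (ATLRel.degen hm i), map_zero]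

variable (hq : IsUnit q)

theorem isE.apply_castSucc {n : ℕ} {hn : 1 ≤ n} {E : ATL K q (n + 1) →ₐ[K] TLA K q n}
    (hE : isE q n hn E) (i : Fin n) : E (g q (n + 1) i.castSucc) = ↑(genUnit hq n i) :=
  (hE.1 i).trans (coe_genUnit hq i.isLt).symm

theorem isE.apply_last {k : ℕ} {E : ATL K q (k + 2) →ₐ[K] TLA K q (k + 1)}
    (hE : isE q (k + 1) (by omega) E) :
    E (g q (k + 2) (Fin.last (k + 1))) =
      ↑(prefixProd (genUnit hq (k + 1)) (k + 1) * (prefixProd (genUnit hq (k + 1)) k)⁻¹) := by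
  rw [hE.2, Units.val_mul, prefixProd_succ, Units.val_mul, coe_prefixProd_genUnit hq (by omega),
    coe_genUnit hq k.lt_succ_self, coe_prefixProd_genUnit_inv hq (by omega)]
  rfl

theorem isE.comp_isF (hq : IsUnit q) {k : ℕ} {F : ATL K q (k + 2) →ₐ[K] ATL K q (k + 3)}
    {E₁ : ATL K q (k + 3) →ₐ[K] TLA K q (k + 2)}
    {E₀ : ATL K q (k + 2) →ₐ[K] TLA K q (k + 1)}
    {ι : TLA K q (k + 1) →ₐ[K] TLA K q (k + 2)}
    (hF : isF q (k + 2) (by omega) F) (hE₁ : isE q (k + 2) (by omega) E₁)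
    (hE₀ : isE q (k + 1) (by omega) E₀)
    (hι : ∀ i : Fin (k + 1), ι (gA q (k + 1) i) = gA q (k + 2) i.castSucc) :
    E₁.comp F = ι.comp E₀ := by
  refine ATL.algHom_ext fun i => ?_
  induction i using Fin.lastCases with
  | last =>
    have hF_last : F (g q (k + 2) (Fin.last (k + 1))) =
        g q (k + 3) (Fin.last (k + 1)).castSucc * g q (k + 3) (Fin.last (k + 2)) *
          qinv q (g q (k + 3) (Fin.last (k + 1)).castSucc) := hF.2
    have hs := satisfiesBraidRelations_genUnit hq (n := k + 1 + 1)
    set u := prefixProd (genUnit hq (k + 1)) (k + 1) * (prefixProd (genUnit hq (k + 1)) k)⁻¹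
    rw [AlgHom.comp_apply, AlgHom.comp_apply, hF_last, map_mul, map_mul, map_qinv,
      hE₁.apply_castSucc hq, Fin.val_last, hE₁.apply_last hq, hE₀.apply_last hq,
      qinv_coe_genUnit hq (by omega), ← Units.val_mul, ← Units.val_mul,
      hs.conj_prefixProd_mul_inv le_rfl,
      show ι ↑u = ↑(Units.map (ι : TLA K q (k + 1) →* TLA K q (k + 2)) u) from rfl,
      map_mul, map_inv,
      units_map_prefixProd_genUnit hq hι le_rfl, units_map_prefixProd_genUnit hq hι (by omega)]
  | cast i =>
    have hF_i : F (g q (k + 2) i.castSucc) = g q (k + 3) i.castSucc.castSucc := hF.1 i i.isLt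
    rw [AlgHom.comp_apply, AlgHom.comp_apply, hF_i, hE₁.1, hE₀.1, hι]

theorem isE.apply_dynkin {k : ℕ} {E : ATL K q (k + 2) →ₐ[K] TLA K q (k + 1)}
    (hE : isE q (k + 1) (by omega) E) {ψ : ATL K q (k + 2) →ₐ[K] ATL K q (k + 2)}
    (hψ : ∀ i, ψ (g q (k + 2) i) = g q (k + 2) (csucc i)) (x : ATL K q (k + 2)) :
    E (ψ x) = ↑(prefixProd (genUnit hq (k + 1)) (k + 1)) * E x *
      ↑(prefixProd (genUnit hq (k + 1)) (k + 1))⁻¹ := by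
  have hs := satisfiesBraidRelations_genUnit hq (n := k + 1)
  suffices E.comp ψ = (MulSemiringAction.toAlgEquiv K (TLA K q (k + 1))
      (ConjAct.toConjAct (prefixProd (genUnit hq (k + 1)) (k + 1))) : _ →ₐ[K] _).comp E
    from (AlgHom.congr_fun this x).trans (ConjAct.units_smul_def _ _)
  refine ATL.algHom_ext fun i => ?_
  change E (ψ _) = ConjAct.toConjAct (prefixProd (genUnit hq (k + 1)) (k + 1)) • E _
  rw [ConjAct.units_smul_def, ConjAct.ofConjAct_toConjAct, hψ]
  induction i using Fin.lastCases with
  | last =>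
    have hc := hs.mul_prefixProd_mul_prefixProd (k := k) le_rfl
    rw [csucc_last, show (0 : Fin (k + 2)) = (0 : Fin (k + 1)).castSucc from rfl,
      hE.apply_castSucc hq, hE.apply_last hq, ← Units.val_mul, ← Units.val_mul, Fin.val_zero,
      eq_mul_inv_of_mul_eq (eq_mul_inv_of_mul_eq hc)]
    group
  | cast j =>
    rw [csucc_castSucc]
    induction j using Fin.lastCases with
    | last =>
      rw [Fin.succ_last, hE.apply_last hq, hE.apply_castSucc hq, ← Units.val_mul,
        ← Units.val_mul, Fin.val_last, prefixProd_succ]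
      group
    | cast j =>
      rw [Fin.succ_castSucc, hE.apply_castSucc hq, hE.apply_castSucc hq, ← Units.val_mul,
        ← Units.val_mul, Fin.val_succ, Fin.val_castSucc,
        eq_mul_inv_of_mul_eq (hs.mul_prefixProd (i := j) (by omega) le_rfl)]

end Affine

end AffineTL

open AffineTL in
/-- Proposition 5.2.4: composing a Jones–Markov trace `(τ_{n+1})` on the tower
`(TL_n(q))` with the surjections `E_n` yields a family `ρ_{n+1} := τ_{n+1} ∘ E_n` (here
indexed by `ρ m := τ m ∘ E m` on `TLhat_{m+1}(q)`) satisfying the affine Markov conditions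
and invariant under the Dynkin automorphisms. -/
theorem statement13 {K : Type*} [CommRing K]
    (q sq : K) (hq : IsUnit q)
    -- the homomorphisms `F_m : TLhat_m(q) → TLhat_{m+1}(q)`
    (F : ∀ m : ℕ, ATL K q m →ₐ[K] ATL K q (m + 1))
    (hF : ∀ m : ℕ, ∀ hm : 2 ≤ m, isF q m hm (F m))
    -- the surjections `E_m : TLhat_{m+1}(q) → TL_m(q)`
    (E : ∀ m : ℕ, ATL K q (m + 1) →ₐ[K] TLA K q m)
    (hE : ∀ m : ℕ, ∀ hm : 1 ≤ m, isE q m hm (E m))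
    -- the Dynkin automorphisms `ψ_m`
    (ψ : ∀ m : ℕ, ATL K q m ≃ₐ[K] ATL K q m)
    (hψ : ∀ m : ℕ, ∀ i : Fin m, (ψ m) (g q m i) = g q m (csucc i))
    -- a Jones–Markov trace `(τ_{n+1})_{n ≥ 0}`, `τ m` being the trace on `TL_m(q)`
    (τ : ∀ m : ℕ, TLA K q m →ₗ[K] K)
    (htr : ∀ m, IsTrace (τ m))
    (ι : ∀ m : ℕ, TLA K q m →ₐ[K] TLA K q (m + 1))
    (hι : ∀ m : ℕ, ∀ i : Fin m, ι m (gA q m i) = gA q (m + 1) i.castSucc)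
    (hτM : ∀ m : ℕ, ∀ h : TLA K q m,
      τ (m + 1) (ι m h * (sq • gA q (m + 1) (Fin.last m))) = τ m h)
    (hτM' : ∀ m : ℕ, ∀ h : TLA K q m,
      τ (m + 1) (ι m h * (Ring.inverse sq • qinv q (gA q (m + 1) (Fin.last m)))) = τ m h) :
    -- `ρ_{n+1}(F_n(h)·T_{σ_n}^{±1}) = ρ_n(h)`
    (∀ m : ℕ, ∀ h : ATL K q (m + 1),
      ((τ (m + 1)).comp (E (m + 1)).toLinearMap)
          (F (m + 1) h * (sq • g q (m + 2) ⟨m, by omega⟩)) =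
        ((τ m).comp (E m).toLinearMap) h) ∧
    (∀ m : ℕ, ∀ h : ATL K q (m + 1),
      ((τ (m + 1)).comp (E (m + 1)).toLinearMap)
          (F (m + 1) h * (Ring.inverse sq • qinv q (g q (m + 2) ⟨m, by omega⟩))) =
        ((τ m).comp (E m).toLinearMap) h) ∧
    -- each `ρ_n` is invariant under the Dynkin automorphism `ψ_n`
    (∀ m : ℕ, ∀ x : ATL K q (m + 1),
      ((τ m).comp (E m).toLinearMap) (ψ (m + 1) x) =
        ((τ m).comp (E m).toLinearMap) x) := by
  have hEF : ∀ m x, E (m + 1) (F (m + 1) x) = ι m (E m x) := by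
    rintro (_ | k)
    · exact AlgHom.congr_fun (show (E 1).comp (F 1) = (ι 0).comp (E 0) from
        ATL.algHom_ext fun i => by simp [g_eq_zero_of_le_one le_rfl i])
    · exact AlgHom.congr_fun (isE.comp_isF hq (hF (k + 2) (by omega)) (hE (k + 2) (by omega))
        (hE (k + 1) (by omega)) (hι (k + 1)))
  have hE_last (m : ℕ) : E (m + 1) (g q (m + 2) ⟨m, by omega⟩) = gA q (m + 1) (Fin.last m) :=
    (hE (m + 1) (by omega)).1 (Fin.last m)
  refine ⟨fun m h => ?_, fun m h => ?_, fun m x => ?_⟩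
  · simpa only [LinearMap.comp_apply, AlgHom.toLinearMap_apply, map_mul, map_smul, hEF, hE_last]
      using hτM m (E m h)
  · simpa only [LinearMap.comp_apply, AlgHom.toLinearMap_apply, map_mul, map_smul, map_qinv, hEF,
      hE_last] using hτM' m (E m h)
  · simp only [LinearMap.comp_apply, AlgHom.toLinearMap_apply]
    rcases m with _ | k
    · have hψ_id : (ψ 1 : ATL K q 1 →ₐ[K] ATL K q 1) = AlgHom.id K _ :=
        ATL.algHom_ext fun i => by simp [hψ, Subsingleton.elim (csucc i) i]
      rw [← AlgEquiv.coe_toAlgHom, hψ_id, AlgHom.id_apply]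
    · rw [← AlgEquiv.coe_toAlgHom,
        isE.apply_dynkin hq (hE (k + 1) (by omega)) (ψ := ψ (k + 2)) (hψ (k + 2))]
      exact (htr (k + 1)).apply_units_conj _ _
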